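/- arXiv:2604.07796 — 2 statements merged into one kernel-verified Lean document; each statement's English description precedes it below -/
import Mathlib

section
/- Let X have mean μ with |μ| ≤ 4σ and E[|X-μ|^k] ≤ σ^k for some k > 1. Then for every t > 8σ, |E[X · 1{|X| > t}]| ≤ σ^k/(t - |μ|)^{k-1} + |μ| · σ^k/(t - |μ|)^k. -/
open MeasureTheory

/-! On `{|X| > t}` we have `|X - μ| ≥ t - |μ| =: c > 0`, so the pointwise Markov-type bounds
`|X - μ| ≤ |X - μ|^k / c^(k-1)` and `1 ≤ |X - μ|^k / c^k` turn `|X| ≤ |X - μ| + |μ|` into a bound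
by `|X - μ|^k`; integrating it and using the moment bound gives the claim. -/

lemma le_rpow_div_rpow_sub_one {c y k : ℝ} (hc : 0 < c) (hcy : c ≤ y) (hk : 1 ≤ k) :
    y ≤ y ^ k / c ^ (k - 1) := by
  have hy : 0 ≤ y := hc.le.trans hcy
  rw [le_div_iff₀ (Real.rpow_pos_of_pos hc _)]
  calc y * c ^ (k - 1) ≤ y * y ^ (k - 1) := by gcongr
    _ = y ^ k := by rw [← Real.rpow_one_add' hy (by linarith), add_sub_cancel]

lemma one_le_rpow_div_rpow {c y k : ℝ} (hc : 0 < c) (hcy : c ≤ y) (hk : 0 ≤ k) :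
    1 ≤ y ^ k / c ^ k :=
  (one_le_div (Real.rpow_pos_of_pos hc _)).mpr (Real.rpow_le_rpow hc.le hcy hk)

lemma abs_ite_lt_abs_le {x m t k : ℝ} (hmt : |m| < t) (hk : 1 ≤ k) :
    |if t < |x| then x else 0| ≤
      |x - m| ^ k / (t - |m|) ^ (k - 1) + |m| * (|x - m| ^ k / (t - |m|) ^ k) := by
  split_ifs with hx
  · have hc : 0 < t - |m| := sub_pos.mpr hmt
    have htri := abs_sub_abs_le_abs_sub x m
    have hcx : t - |m| ≤ |x - m| := by linarith
    calc |x| ≤ |x - m| + |m| := by linarith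
      _ ≤ _ := add_le_add (le_rpow_div_rpow_sub_one hc hcx hk)
          (le_mul_of_one_le_right (abs_nonneg m) (one_le_rpow_div_rpow hc hcx (by linarith)))
  · rw [abs_zero]
    have hc : 0 ≤ t - |m| := by linarith
    positivity

lemma abs_integral_ite_lt_abs_le {Ω : Type*} [MeasurableSpace Ω] {P : Measure Ω} {X : Ω → ℝ}
    (hX : Measurable X) (hXint : Integrable X P) {m t k : ℝ} (hmt : |m| < t) (hk : 1 ≤ k)
    (hint : Integrable (fun ω => |X ω - m| ^ k) P) :
    |∫ ω, (if t < |X ω| then X ω else 0) ∂P| ≤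
      (∫ ω, |X ω - m| ^ k ∂P) / (t - |m|) ^ (k - 1)
        + |m| * ((∫ ω, |X ω - m| ^ k ∂P) / (t - |m|) ^ k) := by
  have htail : Integrable (fun ω => if t < |X ω| then X ω else 0) P :=
    hXint.indicator (measurableSet_lt measurable_const hX.abs)
  calc |∫ ω, (if t < |X ω| then X ω else 0) ∂P|
      ≤ ∫ ω, |X ω - m| ^ k / (t - |m|) ^ (k - 1) + |m| * (|X ω - m| ^ k / (t - |m|) ^ k) ∂P :=
        (abs_integral_le_integral_abs).trans <| integral_mono htail.abs
          ((hint.div_const _).add ((hint.div_const _).const_mul _))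
          fun ω => abs_ite_lt_abs_le hmt hk
    _ = _ := by
        rw [integral_add (hint.div_const _) ((hint.div_const _).const_mul _),
          integral_div, integral_const_mul, integral_div]

theorem stmt4_general {Ω : Type*} [MeasurableSpace Ω] (μP : Measure Ω)
    (X : Ω → ℝ) (hX : Measurable X) (μ σ k t : ℝ) (hk : 1 < k)
    (hXint : Integrable X μP) (hμ4 : |μ| ≤ 4 * σ)
    (hint : Integrable (fun ω => |X ω - μ| ^ k) μP)
    (hmom : ∫ ω, |X ω - μ| ^ k ∂μP ≤ σ ^ k)
    (ht : 8 * σ < t) :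
    |∫ ω, (if t < |X ω| then X ω else 0) ∂μP| ≤
      σ ^ k / (t - |μ|) ^ (k - 1) + |μ| * (σ ^ k / (t - |μ|) ^ k) := by
  have hμt : |μ| < t := by linarith [abs_nonneg μ]
  have hc : 0 < t - |μ| := sub_pos.mpr hμt
  exact (abs_integral_ite_lt_abs_le hX hXint hμt hk.le hint).trans (by gcongr)

/-- Bound on the tail contribution to the mean. -/
theorem stmt4 {Ω : Type*} [MeasurableSpace Ω] (μP : Measure Ω) [IsProbabilityMeasure μP]
    (X : Ω → ℝ) (hX : Measurable X) (μ σ k t : ℝ) (hk : 1 < k) (hσ : 0 < σ)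
    (hXint : Integrable X μP) (hμ : μ = ∫ ω, X ω ∂μP) (hμ4 : |μ| ≤ 4 * σ)
    (hint : Integrable (fun ω => |X ω - μ| ^ k) μP)
    (hmom : ∫ ω, |X ω - μ| ^ k ∂μP ≤ σ ^ k)
    (ht : 8 * σ < t) :
    |∫ ω, (if t < |X ω| then X ω else 0) ∂μP| ≤
      σ ^ k / (t - |μ|) ^ (k - 1) + |μ| * (σ ^ k / (t - |μ|) ^ k) :=
  stmt4_general μP X hX μ σ k t hk hXint hμ4 hint hmom ht
end

section
/- Let a < b be reals, X a real random variable independent of T ~ Uniform(a, b). Define p_a = Pr(a ≤ X ≤ T) and p_b = Pr(T < X ≤ b). Then a·p_a + b·p_b = E[X · 1{a ≤ X ≤ b}]. -/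
/-!
Conditioning on `X` (legitimate by independence) turns the two probabilities into the means of
`1{a ≤ X} U[X, ∞)` and `1{X ≤ b} U(-∞, X)`, where `U` is the uniform law on `(a, b)`. For
`x ∈ [a, b]` these are `(b - x)/(b - a)` and `(x - a)/(b - a)`, and
`a (b - x) + b (x - a) = x (b - a)`: rounding `x` down to `a` or up to `b` with these
probabilities is unbiased.
-/

open MeasureTheory ProbabilityTheory Set

section Independence

variable {Ω α β : Type*} [MeasurableSpace Ω] [MeasurableSpace α] [MeasurableSpace β]
  {μ : Measure Ω} {X : Ω → α} {T : Ω → β} {S : Set (α × β)}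

lemma integrable_measureReal_prodMk_left [IsFiniteMeasure μ] (ν : Measure β) [IsFiniteMeasure ν]
    (hX : Measurable X) (hS : MeasurableSet S) :
    Integrable (fun ω ↦ ν.real (Prod.mk (X ω) ⁻¹' S)) μ :=
  .of_bound ((measurable_measure_prodMk_left hS).ennreal_toReal.comp hX).aestronglyMeasurable
    (ν.real univ) (ae_of_all _ fun _ ↦ by
      rw [Real.norm_of_nonneg measureReal_nonneg]; exact measureReal_mono (subset_univ _))

lemma ProbabilityTheory.IndepFun.measureReal_preimage_eq_integral [IsFiniteMeasure μ]
    (hXT : IndepFun X T μ)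
    (hX : Measurable X) (hT : Measurable T) (hS : MeasurableSet S) :
    μ.real ((fun ω ↦ (X ω, T ω)) ⁻¹' S)
      = ∫ ω, (μ.map T).real (Prod.mk (X ω) ⁻¹' S) ∂μ := by
  have hjoint : μ.map (fun ω ↦ (X ω, T ω)) = (μ.map X).prod (μ.map T) :=
    (indepFun_iff_map_prod_eq_prod_map_map hX.aemeasurable hT.aemeasurable).mp hXT
  rw [measureReal_def, ← Measure.map_apply (hX.prodMk hT) hS, hjoint, Measure.prod_apply hS,
    ← integral_toReal (measurable_measure_prodMk_left hS).aemeasurable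
      (ae_of_all _ fun _ ↦ measure_lt_top _ _),
    integral_map hX.aemeasurable
      (measurable_measure_prodMk_left hS).ennreal_toReal.aestronglyMeasurable]
  rfl

end Independence

section Uniform

variable {a b : ℝ}

lemma cond_volume_Ioo_real_Iio (hab : a ≤ b) (x : ℝ) :
    (volume[|Ioo a b]).real (Iio x) = max (min b x - a) 0 / (b - a) := by
  rw [measureReal_def, cond_apply' measurableSet_Iio, Ioo_inter_Iio, Real.volume_Ioo,
    Real.volume_Ioo, ENNReal.toReal_mul, ENNReal.toReal_inv, ENNReal.toReal_ofReal (by linarith),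
    ENNReal.toReal_ofReal', div_eq_inv_mul]

lemma cond_volume_Ioo_rounding_mean (hab : a < b) (x : ℝ) :
    a * (volume[|Ioo a b]).real {t | a ≤ x ∧ x ≤ t}
      + b * (volume[|Ioo a b]).real {t | t < x ∧ x ≤ b}
      = if a ≤ x ∧ x ≤ b then x else 0 := by
  have : IsProbabilityMeasure (volume[|Ioo a b]) := cond_isProbabilityMeasure_of_finite
    (by simp [Real.volume_Ioo, hab]) (by simp [Real.volume_Ioo])
  have hIci : (volume[|Ioo a b]).real (Ici x) = 1 - (volume[|Ioo a b]).real (Iio x) := by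
    rw [← compl_Iio, probReal_compl_eq_one_sub measurableSet_Iio]
  have hIio := cond_volume_Ioo_real_Iio hab.le x
  have hba : b - a ≠ 0 := sub_ne_zero.mpr hab.ne'
  rcases lt_or_ge x a with hxa | hax
  · have h₁ : {t : ℝ | a ≤ x ∧ x ≤ t} = ∅ := by simp [not_le.mpr hxa]
    have h₂ : {t : ℝ | t < x ∧ x ≤ b} = Iio x := by ext; simp [hxa.le.trans hab.le]
    rw [h₁, h₂, hIio, if_neg (by simp [not_le.mpr hxa]),
      max_eq_right (by linarith [min_le_right b x])]
    simp
  rcases le_or_gt x b with hxb | hbx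
  · have h₁ : {t : ℝ | a ≤ x ∧ x ≤ t} = Ici x := by ext; simp [hax]
    have h₂ : {t : ℝ | t < x ∧ x ≤ b} = Iio x := by ext; simp [hxb]
    rw [h₁, h₂, hIci, hIio, if_pos ⟨hax, hxb⟩, min_eq_right hxb, max_eq_left (by linarith)]
    field_simp
    ring
  · have h₁ : {t : ℝ | a ≤ x ∧ x ≤ t} = Ici x := by ext; simp [hax]
    have h₂ : {t : ℝ | t < x ∧ x ≤ b} = ∅ := by simp [not_le.mpr hbx]
    rw [h₁, h₂, hIci, hIio, if_neg (by simp [not_le.mpr hbx]), min_eq_left hbx.le,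
      max_eq_left (by linarith)]
    simp [div_self hba]

end Uniform

theorem stmt6_general {Ω : Type*} [MeasurableSpace Ω] (μP : Measure Ω) [IsProbabilityMeasure μP]
    (a b : ℝ) (hab : a < b) (X T : Ω → ℝ) (hX : Measurable X) (hT : Measurable T)
    (hunif : MeasureTheory.pdf.IsUniform T (Set.Ioo a b) μP volume)
    (hindep : ProbabilityTheory.IndepFun X T μP) :
    a * (μP {ω | a ≤ X ω ∧ X ω ≤ T ω}).toReal
      + b * (μP {ω | T ω < X ω ∧ X ω ≤ b}).toReal
      = ∫ ω, (if a ≤ X ω ∧ X ω ≤ b then X ω else 0) ∂μP := by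
  have hS₁ : MeasurableSet {p : ℝ × ℝ | a ≤ p.1 ∧ p.1 ≤ p.2} :=
    (measurableSet_le measurable_const measurable_fst).inter
      (measurableSet_le measurable_fst measurable_snd)
  have hS₂ : MeasurableSet {p : ℝ × ℝ | p.2 < p.1 ∧ p.1 ≤ b} :=
    (measurableSet_lt measurable_snd measurable_fst).inter
      (measurableSet_le measurable_fst measurable_const)
  rw [← measureReal_def, ← measureReal_def,
    show {ω | a ≤ X ω ∧ X ω ≤ T ω}
      = (fun ω ↦ (X ω, T ω)) ⁻¹' {p | a ≤ p.1 ∧ p.1 ≤ p.2} from rfl,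
    show {ω | T ω < X ω ∧ X ω ≤ b}
      = (fun ω ↦ (X ω, T ω)) ⁻¹' {p | p.2 < p.1 ∧ p.1 ≤ b} from rfl,
    hindep.measureReal_preimage_eq_integral hX hT hS₁,
    hindep.measureReal_preimage_eq_integral hX hT hS₂,
    show μP.map T = volume[|Ioo a b] from hunif,
    ← integral_const_mul, ← integral_const_mul,
    ← integral_add ((integrable_measureReal_prodMk_left _ hX hS₁).const_mul a)
      ((integrable_measureReal_prodMk_left _ hX hS₂).const_mul b)]
  exact integral_congr_ae (ae_of_all _ fun ω ↦ cond_volume_Ioo_rounding_mean hab (X ω))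

/-- Unbiasedness identity of the randomized-threshold estimator:
    a·Pr(a ≤ X ≤ T) + b·Pr(T < X ≤ b) = E[X · 1{a ≤ X ≤ b}] when T ~ Unif(a,b) ⟂ X. -/
theorem stmt6 {Ω : Type*} [MeasurableSpace Ω] (μP : Measure Ω) [IsProbabilityMeasure μP]
    (a b : ℝ) (hab : a < b) (X T : Ω → ℝ) (hX : Measurable X) (hT : Measurable T)
    (hunif : MeasureTheory.pdf.IsUniform T (Set.Ioo a b) μP volume)
    (hindep : ProbabilityTheory.IndepFun X T μP)
    (hXint : Integrable X μP) :
    a * (μP {ω | a ≤ X ω ∧ X ω ≤ T ω}).toReal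
      + b * (μP {ω | T ω < X ω ∧ X ω ≤ b}).toReal
      = ∫ ω, (if a ≤ X ω ∧ X ω ≤ b then X ω else 0) ∂μP :=
  stmt6_general μP a b hab X T hX hT hunif hindep
end
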